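/- arXiv:2106.13501 — 3 statements merged into one kernel-verified Lean document; each statement's English description precedes it below -/
import Mathlib

section
/- Under Assumption (Exch), for all integers n, m ≥ 1 and all α ∈ (0,1), the semi-supervised Benjamini–Hochberg procedure BĤ_α satisfies FDR(P, BĤ_α) ≤ α·m_0/m. -/
open MeasureTheory ProbabilityTheory Finset

noncomputable section

namespace SemiSup

/-- The data space: a null training sample of size `n` and a test sample of size `m`. -/
abbrev Data (n m : ℕ) := (Fin n → ℝ) × (Fin m → ℝ)

/-- Conservative empirical p-value. -/
def phat (n : ℕ) (Y : Fin n → ℝ) (x : ℝ) : ℝ :=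
  (1 + (((Finset.univ : Finset (Fin n)).filter (fun j => Y j ≥ x)).card : ℝ)) / (n + 1)

/-- Unbiased empirical p-value. -/
def ptilde (n : ℕ) (Y : Fin n → ℝ) (x : ℝ) : ℝ :=
  (((Finset.univ : Finset (Fin n)).filter (fun j => Y j ≥ x)).card : ℝ) / n

/-- BH rejection number `k̂ = max {k ∈ {0,…,m} : p_(k) ≤ α k/m}`, using that
`p_(k) ≤ t` iff at least `k` of the p-values are `≤ t` (convention `p_(0) = 0`). -/
def BHk (m : ℕ) (α : ℝ) (p : Fin m → ℝ) : ℕ :=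
  sSup {k : ℕ | k ≤ m ∧
    k ≤ (((Finset.univ : Finset (Fin m)).filter (fun i => p i ≤ α * k / m)).card)}

/-- BH rejection set at level `α`. -/
def BHset (m : ℕ) (α : ℝ) (p : Fin m → ℝ) : Finset (Fin m) :=
  Finset.univ.filter (fun i => p i ≤ α * (BHk m α p) / m)

/-- The semi-supervised BH procedure (BH applied to the empirical p-values). -/
def BHhat (n m : ℕ) (α : ℝ) (z : Data n m) : Finset (Fin m) :=
  BHset m α (fun i => phat n z.1 (z.2 i))

/-- Upper-tail function of a null distribution. -/
def F0 (P0 : Measure ℝ) (t : ℝ) : ℝ := (P0 (Set.Ici t)).toReal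

/-- The oracle BH procedure (BH applied to the oracle p-values `F0 (X i)`). -/
def BHstar (n m : ℕ) (P0 : Measure ℝ) (α : ℝ) (z : Data n m) : Finset (Fin m) :=
  BHset m α (fun i => F0 P0 (z.2 i))

/-- False discovery proportion. -/
def FDP {m : ℕ} (H0 R : Finset (Fin m)) : ℝ :=
  ((R ∩ H0).card : ℝ) / max 1 (R.card : ℝ)

/-- False discovery rate. -/
def FDR {n m : ℕ} (P : Measure (Data n m)) (H0 : Finset (Fin m))
    (R : Data n m → Finset (Fin m)) : ℝ :=
  ∫ z, FDP H0 (R z) ∂P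

/-- True discovery proportion (`H1` is the set of false nulls). -/
def TDP {m : ℕ} (H1 R : Finset (Fin m)) : ℝ :=
  ((R ∩ H1).card : ℝ) / max 1 (H1.card : ℝ)

/-- The null family: training sample together with the test statistics of true nulls. -/
def nullVec {n m : ℕ} (H0 : Finset (Fin m)) (z : Data n m) :
    Fin n ⊕ {i : Fin m // i ∈ H0} → ℝ :=
  Sum.elim z.1 (fun i => z.2 i.1)

/-- Assumption (Exch): `(Y_1,…,Y_n, X_i, i ∈ H0)` is exchangeable and independent of
`(X_i, i ∉ H0)`. -/
def Exch {n m : ℕ} (P : Measure (Data n m)) (H0 : Finset (Fin m)) : Prop :=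
  (∀ σ : Equiv.Perm (Fin n ⊕ {i : Fin m // i ∈ H0}),
    P.map (fun z => nullVec H0 z ∘ σ) = P.map (nullVec H0)) ∧
  IndepFun (nullVec H0) (fun z (i : {i : Fin m // i ∉ H0}) => z.2 i.1) P

/-- Assumption (Indep): `(Y_1,…,Y_n, X_i, i ∈ H0)` i.i.d. with law `P0`, independent of
`(X_i, i ∉ H0)`. -/
def IndepAssumption {n m : ℕ} (P : Measure (Data n m)) (H0 : Finset (Fin m))
    (P0 : Measure ℝ) : Prop :=
  iIndepFun (fun i z => nullVec H0 z i) P ∧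
  (∀ i, P.map (fun z => nullVec H0 z i) = P0) ∧
  IndepFun (nullVec H0) (fun z (i : {i : Fin m // i ∉ H0}) => z.2 i.1) P

/-- The product distribution `P0^{⊗n} ⊗ P_1 ⊗ … ⊗ P_m` on the data space. -/
def prodP (n m : ℕ) (P0 : Measure ℝ) (Q : Fin m → Measure ℝ) : Measure (Data n m) :=
  (Measure.pi fun _ : Fin n => P0).prod (Measure.pi Q)

open scoped Classical in
/-- The set `H1(P)` of false nulls of a product distribution. -/
def H1set {m : ℕ} (P0 : Measure ℝ) (Q : Fin m → Measure ℝ) : Finset (Fin m) :=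
  Finset.univ.filter (fun i => Q i ≠ P0)

/-- Membership in the class `P_{n,m}` of product distributions with atomless
(continuous) components. -/
def memP (n m : ℕ) (P0 : Measure ℝ) (Q : Fin m → Measure ℝ) : Prop :=
  IsProbabilityMeasure P0 ∧ (∀ i, IsProbabilityMeasure (Q i)) ∧
  (∀ x : ℝ, P0 {x} = 0) ∧ (∀ i, ∀ x : ℝ, Q i {x} = 0)

/-- Membership in the class `A_{n,m}` (at least one false null). -/
def memA (n m : ℕ) (P0 : Measure ℝ) (Q : Fin m → Measure ℝ) : Prop :=
  memP n m P0 Q ∧ 1 ≤ (H1set P0 Q).card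

/-- Membership in the class `A_{n,m,k,α,β}` of distributions with at least `k`
detectable alternatives. -/
def memAk (n m k : ℕ) (α β : ℝ) (P0 : Measure ℝ) (Q : Fin m → Measure ℝ) : Prop :=
  memA n m P0 Q ∧ k ≤ (H1set P0 Q).card ∧
  ((prodP n m P0 Q)
      {z | ((H1set P0 Q) ∩ BHstar n m P0 (α / 2) z).card < k}).toReal ≤ β

/-- The constant `γ*(α,η)` of Proposition 3 (power upper bound). -/
def γstar (α η : ℝ) : ℝ := α⁻¹ * (η ^ 2)⁻¹ * (1 + η) * 28 * Real.log 2

/-- The constant `γ_*(α,η)` of Theorem 2 (lower bound). -/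
def γlow (α η : ℝ) : ℝ := (((1 + (α * (1 - η)) ^ (-(1 / 2) : ℝ)) ^ (3 : ℕ))⁻¹) / 64

/-! ### Auxiliary material for the proof of Theorem 1 -/

section FDRProof

/-- The defining set of `BHk`. -/
def Sset (m : ℕ) (α : ℝ) (p : Fin m → ℝ) : Set ℕ :=
  {k : ℕ | k ≤ m ∧
    k ≤ (((Finset.univ : Finset (Fin m)).filter (fun i => p i ≤ α * k / m)).card)}

lemma zero_mem_Sset {m : ℕ} {α : ℝ} (p : Fin m → ℝ) : 0 ∈ Sset m α p :=
  ⟨Nat.zero_le _, Nat.zero_le _⟩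

lemma bddAbove_Sset {m : ℕ} {α : ℝ} (p : Fin m → ℝ) : BddAbove (Sset m α p) :=
  ⟨m, fun _ hk => hk.1⟩

lemma BHk_mem {m : ℕ} {α : ℝ} (p : Fin m → ℝ) : BHk m α p ∈ Sset m α p :=
  Nat.sSup_mem ⟨0, zero_mem_Sset p⟩ (bddAbove_Sset p)

lemma le_BHk {m : ℕ} {α : ℝ} {p : Fin m → ℝ} {k : ℕ} (hk : k ∈ Sset m α p) :
    k ≤ BHk m α p :=
  le_csSup (bddAbove_Sset p) hk

lemma BHk_le {m : ℕ} {α : ℝ} (p : Fin m → ℝ) : BHk m α p ≤ m := (BHk_mem p).1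

lemma BHk_mono {m : ℕ} {α : ℝ} {p q : Fin m → ℝ} (h : ∀ i, p i ≤ q i) :
    BHk m α q ≤ BHk m α p := by
  refine le_BHk ?_
  obtain ⟨h1, h2⟩ := BHk_mem (α := α) q
  exact ⟨h1, h2.trans (Finset.card_le_card
    (Finset.monotone_filter_right _ (fun i _ hi => (h i).trans hi)))⟩

lemma mem_BHset_iff {m : ℕ} {α : ℝ} {p : Fin m → ℝ} {i : Fin m} :
    i ∈ BHset m α p ↔ p i ≤ α * (BHk m α p) / m := by
  simp [BHset]

lemma card_BHset {m : ℕ} {α : ℝ} (hm : 1 ≤ m) (hα : 0 ≤ α) (p : Fin m → ℝ) :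
    (BHset m α p).card = BHk m α p := by
  have hmem := BHk_mem (α := α) p
  have hmR : (0:ℝ) < m := by exact_mod_cast hm
  refine le_antisymm (le_BHk ⟨?_, ?_⟩) hmem.2
  · exact (Finset.card_filter_le _ _).trans (by simp)
  · refine Finset.card_le_card (Finset.monotone_filter_right _ (fun i _ hi => hi.trans ?_))
    have hcast : ((BHk m α p : ℝ)) ≤ ((BHset m α p).card : ℝ) := by
      exact_mod_cast hmem.2
    have := mul_le_mul_of_nonneg_left hcast hα
    exact div_le_div_of_nonneg_right this hmR.le |>.trans (le_of_eq rfl)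

lemma one_le_BHk_of_mem {m : ℕ} {α : ℝ} {p : Fin m → ℝ} {i : Fin m}
    (hi : i ∈ BHset m α p) (hp : 0 < p i) : 1 ≤ BHk m α p := by
  rcases Nat.eq_zero_or_pos (BHk m α p) with h | h
  · exfalso
    have h2 := mem_BHset_iff.mp hi
    rw [h] at h2
    simp only [Nat.cast_zero, mul_zero, zero_div] at h2
    linarith
  · exact h

lemma phat_pos (n : ℕ) (Y : Fin n → ℝ) (x : ℝ) : 0 < phat n Y x := by
  unfold phat
  positivity

/-- Contribution of hypothesis `i` to the FDP of the BH procedure. -/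
def phi (n m : ℕ) (α : ℝ) (i : Fin m) (z : Data n m) : ℝ :=
  if i ∈ BHhat n m α z then (max 1 ((BHhat n m α z).card : ℝ))⁻¹ else 0

lemma phi_nonneg (n m : ℕ) (α : ℝ) (i : Fin m) (z : Data n m) : 0 ≤ phi n m α i z := by
  unfold phi
  split_ifs
  · positivity
  · exact le_rfl

lemma phi_le_one (n m : ℕ) (α : ℝ) (i : Fin m) (z : Data n m) : phi n m α i z ≤ 1 := by
  unfold phi
  split_ifs
  · exact inv_le_one_of_one_le₀ (le_max_left _ _)
  · linarith

lemma FDP_eq_sum {n m : ℕ} (α : ℝ) (H0 : Finset (Fin m)) (z : Data n m) :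
    FDP H0 (BHhat n m α z) = ∑ i ∈ H0, phi n m α i z := by
  classical
  unfold FDP phi
  rw [Finset.sum_ite, Finset.sum_const, Finset.sum_const_zero, add_zero,
      Finset.filter_mem_eq_inter, Finset.inter_comm, div_eq_mul_inv, nsmul_eq_mul]

/-- Swap the test point `X i` with training point `Y j` (`c = some j`), or do nothing
(`c = none`). -/
def swapd (n m : ℕ) (i : Fin m) : Option (Fin n) → Data n m → Data n m
  | none => id
  | some j => fun z => (Function.update z.1 j (z.2 i), Function.update z.2 i (z.1 j))

/-- Pool of null values: the training sample together with `X i`. -/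
def poolv (n m : ℕ) (i : Fin m) (z : Data n m) : Option (Fin n) → ℝ :=
  fun c => c.elim (z.2 i) z.1

/-- Empirical p-values as a function of the data. -/
def pvec (n m : ℕ) (z : Data n m) : Fin m → ℝ := fun l => phat n z.1 (z.2 l)

lemma BHhat_eq {n m : ℕ} (α : ℝ) (z : Data n m) :
    BHhat n m α z = BHset m α (pvec n m z) := rfl

lemma mem_BHhat_iff {n m : ℕ} {α : ℝ} {z : Data n m} {i : Fin m} :
    i ∈ BHhat n m α z ↔ pvec n m z i ≤ α * (BHk m α (pvec n m z)) / m := by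
  rw [BHhat_eq]; exact mem_BHset_iff

lemma snd_swapd {n m : ℕ} (i : Fin m) (c : Option (Fin n)) (z : Data n m) (l : Fin m) :
    (swapd n m i c z).2 l = if l = i then poolv n m i z c else z.2 l := by
  cases c with
  | none => by_cases h : l = i <;> simp [swapd, poolv, h]
  | some j => by_cases h : l = i <;> simp [swapd, poolv, Function.update_apply, h]

lemma count_swapd {n m : ℕ} (i : Fin m) (c : Option (Fin n)) (z : Data n m) (x : ℝ) :
    ((Finset.univ.filter fun j => (swapd n m i c z).1 j ≥ x).card)
      + (if poolv n m i z c ≥ x then 1 else 0)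
    = (Finset.univ.filter fun γ : Option (Fin n) => poolv n m i z γ ≥ x).card := by
  classical
  simp only [Finset.card_filter]
  rw [Fintype.sum_option]
  cases c with
  | none =>
    simp only [swapd, id_eq, poolv, Option.elim]
    grind
  | some j₀ =>
    have hupd : ∀ j : Fin n, (if (swapd n m i (some j₀) z).1 j ≥ x then (1:ℕ) else 0)
        = Function.update (fun j : Fin n => if z.1 j ≥ x then (1:ℕ) else 0) j₀
            (if z.2 i ≥ x then 1 else 0) j := by
      intro j
      by_cases h : j = j₀ <;> simp [swapd, Function.update_apply, h]
    rw [Finset.sum_congr rfl (fun j _ => hupd j),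
      Finset.sum_update_of_mem (Finset.mem_univ j₀),
      ← Finset.add_sum_erase Finset.univ _ (Finset.mem_univ j₀)]
    simp only [poolv, Option.elim, Finset.erase_eq]
    have key : ∀ a b c : ℕ, (a + c) + b = a + (b + c) := fun a b c => by ring
    convert key _ _ _ <;> split_ifs <;> simp_all

lemma pvec_swapd_i {n m : ℕ} (i : Fin m) (c : Option (Fin n)) (z : Data n m) :
    pvec n m (swapd n m i c z) i
      = ((Finset.univ.filter fun γ : Option (Fin n) =>
            poolv n m i z γ ≥ poolv n m i z c).card : ℝ) / (n + 1) := by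
  have hc := count_swapd i c z (poolv n m i z c)
  rw [if_pos (show poolv n m i z c ≥ poolv n m i z c from le_refl _)] at hc
  show phat n (swapd n m i c z).1 ((swapd n m i c z).2 i) = _
  rw [snd_swapd, if_pos rfl]
  unfold phat
  rw [← hc]
  push_cast
  ring

lemma pvec_swapd_mono {n m : ℕ} (i : Fin m) (z : Data n m) {c c' : Option (Fin n)}
    (h : poolv n m i z c' ≤ poolv n m i z c) (l : Fin m) :
    pvec n m (swapd n m i c z) l ≤ pvec n m (swapd n m i c' z) l := by
  by_cases hl : l = i
  · rw [hl, pvec_swapd_i, pvec_swapd_i]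
    have hcard : (Finset.univ.filter fun γ : Option (Fin n) =>
          poolv n m i z γ ≥ poolv n m i z c).card
        ≤ (Finset.univ.filter fun γ : Option (Fin n) =>
            poolv n m i z γ ≥ poolv n m i z c').card :=
      Finset.card_le_card (Finset.monotone_filter_right _ (fun γ _ hγ => le_trans h hγ))
    gcongr <;> exact_mod_cast hcard
  · show phat n (swapd n m i c z).1 ((swapd n m i c z).2 l)
        ≤ phat n (swapd n m i c' z).1 ((swapd n m i c' z).2 l)
    rw [snd_swapd, if_neg hl, snd_swapd, if_neg hl]
    have h1 := count_swapd i c z (z.2 l)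
    have h2 := count_swapd i c' z (z.2 l)
    have hind : (if poolv n m i z c' ≥ z.2 l then (1:ℕ) else 0)
        ≤ (if poolv n m i z c ≥ z.2 l then 1 else 0) := by
      by_cases hx : poolv n m i z c' ≥ z.2 l
      · rw [if_pos hx, if_pos (le_trans hx h)]
      · rw [if_neg hx]
        exact Nat.zero_le _
    have hcount : (Finset.univ.filter fun j => (swapd n m i c z).1 j ≥ z.2 l).card
        ≤ (Finset.univ.filter fun j => (swapd n m i c' z).1 j ≥ z.2 l).card := by
      omega
    unfold phat
    gcongr <;> exact_mod_cast hcount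

lemma sum_phi_swapd_le {n m : ℕ} {α : ℝ} (hm : 1 ≤ m) (hα : 0 < α) (i : Fin m)
    (z : Data n m) :
    ∑ c : Option (Fin n), phi n m α i (swapd n m i c z) ≤ ((n : ℝ) + 1) * α / m := by
  classical
  have hmR : (0:ℝ) < m := by exact_mod_cast hm
  set T := Finset.univ.filter
      (fun c : Option (Fin n) => i ∈ BHhat n m α (swapd n m i c z)) with hT
  have hsum : ∑ c : Option (Fin n), phi n m α i (swapd n m i c z)
      = ∑ c ∈ T, (max 1 ((BHhat n m α (swapd n m i c z)).card : ℝ))⁻¹ := by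
    rw [hT, Finset.sum_filter]
    exact Finset.sum_congr rfl (fun c _ => rfl)
  rw [hsum]
  rcases T.eq_empty_or_nonempty with h | hne
  · rw [h, Finset.sum_empty]
    positivity
  · obtain ⟨c₀, hc₀, hmin⟩ := T.exists_min_image (poolv n m i z) hne
    have hrej : ∀ c ∈ T, i ∈ BHhat n m α (swapd n m i c z) :=
      fun c hc => (Finset.mem_filter.mp hc).2
    set K : Option (Fin n) → ℕ := fun c => BHk m α (pvec n m (swapd n m i c z)) with hK
    have hcard : ∀ c, (BHhat n m α (swapd n m i c z)).card = K c := by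
      intro c
      rw [BHhat_eq]
      exact card_BHset hm hα.le _
    have hk0 : 1 ≤ K c₀ :=
      one_le_BHk_of_mem (BHhat_eq α _ ▸ hrej c₀ hc₀) (phat_pos _ _ _)
    have hKmono : ∀ c ∈ T, K c₀ ≤ K c :=
      fun c hc => BHk_mono (pvec_swapd_mono i z (hmin c hc))
    have hterm : ∀ c ∈ T,
        (max 1 ((BHhat n m α (swapd n m i c z)).card : ℝ))⁻¹ ≤ ((K c₀ : ℝ))⁻¹ := by
      intro c hc
      rw [hcard c, max_eq_right (by exact_mod_cast (hk0.trans (hKmono c hc)) : (1:ℝ) ≤ K c)]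
      have h1 : (0:ℝ) < (K c₀ : ℝ) := by exact_mod_cast hk0
      have h2 : ((K c₀ : ℝ)) ≤ K c := by exact_mod_cast hKmono c hc
      exact inv_anti₀ h1 h2
    set N := (Finset.univ.filter fun γ : Option (Fin n) =>
        poolv n m i z γ ≥ poolv n m i z c₀).card with hN
    have hTN : T.card ≤ N := Finset.card_le_card (fun c hc =>
      Finset.mem_filter.mpr ⟨Finset.mem_univ _, hmin c hc⟩)
    have hK0pos : (0:ℝ) < (K c₀ : ℝ) := by exact_mod_cast hk0
    have hNle : (N : ℝ) ≤ α * (K c₀) * ((n:ℝ)+1) / m := by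
      have hmem := mem_BHhat_iff.mp (hrej c₀ hc₀)
      rw [pvec_swapd_i] at hmem
      rw [div_le_iff₀ (by positivity : (0:ℝ) < (n:ℝ)+1)] at hmem
      calc (N:ℝ) ≤ α * (K c₀) / m * ((n:ℝ)+1) := hmem
        _ = α * (K c₀) * ((n:ℝ)+1) / m := by ring
    calc ∑ c ∈ T, (max 1 ((BHhat n m α (swapd n m i c z)).card : ℝ))⁻¹
        ≤ T.card • ((K c₀ : ℝ))⁻¹ := Finset.sum_le_card_nsmul _ _ _ hterm
      _ = (T.card : ℝ) * ((K c₀ : ℝ))⁻¹ := nsmul_eq_mul _ _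
      _ ≤ (N : ℝ) * ((K c₀ : ℝ))⁻¹ := by
          gcongr <;> exact_mod_cast hTN
      _ ≤ (α * (K c₀) * ((n:ℝ)+1) / m) * ((K c₀ : ℝ))⁻¹ := by gcongr
      _ = ((n : ℝ) + 1) * α / m := by
          field_simp

lemma measurable_pvec {n m : ℕ} (i : Fin m) :
    Measurable fun z : Data n m => pvec n m z i := by
  have h : (fun z : Data n m => pvec n m z i)
      = fun z => (1 + ∑ j : Fin n, if z.1 j ≥ z.2 i then (1:ℝ) else 0) / (n + 1) := by
    funext z
    show phat n z.1 (z.2 i) = _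
    unfold phat
    congr 2
    rw [Finset.card_filter]
    push_cast
    rfl
  rw [h]
  refine (measurable_const.add (Finset.measurable_sum Finset.univ fun j _ => ?_)).div_const _
  refine Measurable.ite ?_ measurable_const measurable_const
  exact measurableSet_le measurable_snd.eval
    measurable_fst.eval

lemma measurableSet_memS {n m : ℕ} {α : ℝ} (k : ℕ) :
    MeasurableSet {z : Data n m | k ∈ Sset m α (pvec n m z)} := by
  classical
  have hcast : ∀ z : Data n m,
      ((Finset.univ.filter (fun l => pvec n m z l ≤ α * k / m)).card : ℝ)
        = ∑ l : Fin m, if pvec n m z l ≤ α * k / m then (1:ℝ) else 0 := by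
    intro z
    rw [Finset.card_filter]
    push_cast
    rfl
  have h : {z : Data n m | k ∈ Sset m α (pvec n m z)}
      = {z : Data n m | k ≤ m} ∩
        {z : Data n m | (k:ℝ) ≤ ∑ l : Fin m, if pvec n m z l ≤ α * k / m then (1:ℝ) else 0} := by
    ext z
    simp only [Set.mem_setOf_eq, Set.mem_inter_iff, Sset]
    constructor
    · rintro ⟨h1, h2⟩
      refine ⟨h1, ?_⟩
      rw [← hcast z]
      exact_mod_cast h2
    · rintro ⟨h1, h2⟩
      refine ⟨h1, ?_⟩
      rw [← hcast z] at h2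
      exact_mod_cast h2
  rw [h]
  refine (MeasurableSet.const _).inter
    (measurableSet_le measurable_const (Finset.measurable_sum _ fun l _ => ?_))
  exact Measurable.ite (measurableSet_le (measurable_pvec l) measurable_const)
    measurable_const measurable_const

lemma measurableSet_BHk_eq {n m : ℕ} {α : ℝ} (k : ℕ) :
    MeasurableSet {z : Data n m | BHk m α (pvec n m z) = k} := by
  have h : {z : Data n m | BHk m α (pvec n m z) = k}
      = {z : Data n m | k ∈ Sset m α (pvec n m z)} ∩
        ⋂ k' ∈ Finset.range (m+1),
          {z : Data n m | k' ∈ Sset m α (pvec n m z) → k' ≤ k} := by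
    ext z
    simp only [Set.mem_setOf_eq, Set.mem_inter_iff, Set.mem_iInter]
    constructor
    · rintro rfl
      exact ⟨BHk_mem _, fun k' _ hk' => le_BHk hk'⟩
    · rintro ⟨h1, h2⟩
      refine le_antisymm ?_ (le_BHk h1)
      exact h2 _ (Finset.mem_range.mpr (Nat.lt_succ_of_le (BHk_mem (pvec n m z)).1))
        (BHk_mem _)
  rw [h]
  refine (measurableSet_memS k).inter
    (MeasurableSet.biInter (Finset.range (m+1)).countable_toSet fun k' _ => ?_)
  have h2 : {z : Data n m | k' ∈ Sset m α (pvec n m z) → k' ≤ k}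
      = {z : Data n m | k' ∈ Sset m α (pvec n m z)}ᶜ ∪ {z : Data n m | k' ≤ k} := by
    ext z
    by_cases hk : k' ≤ k <;> simp [hk]
  rw [h2]
  exact (measurableSet_memS k').compl.union (MeasurableSet.const _)

lemma measurableSet_mem_BHhat {n m : ℕ} {α : ℝ} (i : Fin m) :
    MeasurableSet {z : Data n m | i ∈ BHhat n m α z} := by
  have h : {z : Data n m | i ∈ BHhat n m α z}
      = ⋃ k ∈ Finset.range (m+1),
          ({z : Data n m | BHk m α (pvec n m z) = k} ∩
            {z : Data n m | pvec n m z i ≤ α * k / m}) := by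
    ext z
    simp only [Set.mem_setOf_eq, Set.mem_iUnion, Set.mem_inter_iff, mem_BHhat_iff]
    constructor
    · intro hmem
      exact ⟨BHk m α (pvec n m z),
        Finset.mem_range.mpr (Nat.lt_succ_of_le (BHk_le _)), rfl, hmem⟩
    · rintro ⟨k, _, rfl, hmem⟩
      exact hmem
  rw [h]
  refine MeasurableSet.biUnion (Finset.range (m+1)).countable_toSet fun k _ => ?_
  exact (measurableSet_BHk_eq k).inter
    (measurableSet_le (measurable_pvec i) measurable_const)

lemma measurable_phi {n m : ℕ} {α : ℝ} (hm : 1 ≤ m) (hα : 0 ≤ α) (i : Fin m) :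
    Measurable (phi n m α i) := by
  classical
  have hrep : phi n m α i = fun z => ∑ k ∈ Finset.range (m+1),
      if (BHk m α (pvec n m z) = k ∧ i ∈ BHhat n m α z) then (max 1 (k:ℝ))⁻¹ else 0 := by
    funext z
    rw [Finset.sum_eq_single (BHk m α (pvec n m z))]
    · unfold phi
      by_cases h : i ∈ BHhat n m α z
      · rw [if_pos h, if_pos ⟨rfl, h⟩]
        congr 2
        rw [BHhat_eq, card_BHset hm hα]
      · rw [if_neg h, if_neg (fun hc => h hc.2)]
    · intro k _ hk
      exact if_neg (fun hc => hk hc.1.symm)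
    · intro hk
      exact absurd (Finset.mem_range.mpr (Nat.lt_succ_of_le (BHk_le _))) hk
  rw [hrep]
  refine Finset.measurable_sum _ fun k _ => ?_
  refine Measurable.ite ?_ measurable_const measurable_const
  exact (measurableSet_BHk_eq k).inter (measurableSet_mem_BHhat i)

lemma measurable_swapd {n m : ℕ} (i : Fin m) (c : Option (Fin n)) :
    Measurable (swapd n m i c) := by
  cases c with
  | none => exact measurable_id
  | some j =>
    refine Measurable.prod ?_ ?_
    · apply measurable_pi_lambda
      intro j'
      by_cases h : j' = j
      · subst h
        simp only [swapd, Function.update_self]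
        exact measurable_snd.eval
      · simp only [swapd, Function.update_of_ne h]
        exact measurable_fst.eval
    · apply measurable_pi_lambda
      intro l
      by_cases h : l = i
      · subst h
        simp only [swapd, Function.update_self]
        exact measurable_fst.eval
      · simp only [swapd, Function.update_of_ne h]
        exact measurable_snd.eval

/-- The identification of the data space with (null vector, non-null test points). -/
def eD (n m : ℕ) (H0 : Finset (Fin m)) :
    Data n m ≃ᵐ ((Fin n ⊕ {i : Fin m // i ∈ H0} → ℝ) × ({i : Fin m // i ∉ H0} → ℝ)) :=
  ((MeasurableEquiv.refl (Fin n → ℝ)).prodCongr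
      (MeasurableEquiv.piEquivPiSubtypeProd (fun _ : Fin m => ℝ) (· ∈ H0))).trans
    ((MeasurableEquiv.prodAssoc).symm.trans
      (((MeasurableEquiv.sumPiEquivProdPi
          (fun _ : Fin n ⊕ {i : Fin m // i ∈ H0} => ℝ)).symm).prodCongr
        (MeasurableEquiv.refl _)))

lemma eD_apply {n m : ℕ} (H0 : Finset (Fin m)) (z : Data n m) :
    eD n m H0 z = (nullVec H0 z, fun l : {i : Fin m // i ∉ H0} => z.2 l.1) := by
  refine Prod.ext ?_ rfl
  funext k
  cases k <;> rfl

lemma measurable_nullVec {n m : ℕ} (H0 : Finset (Fin m)) :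
    Measurable (nullVec (n := n) H0) := by
  apply measurable_pi_lambda
  rintro (j | l)
  · exact measurable_fst.eval
  · exact measurable_snd.eval

lemma measurable_X1 {n m : ℕ} (H0 : Finset (Fin m)) :
    Measurable (fun (z : Data n m) (l : {i : Fin m // i ∉ H0}) => z.2 l.1) :=
  measurable_pi_lambda _ fun _ => measurable_snd.eval

lemma map_swapd_eq {n m : ℕ} (P : Measure (Data n m)) [IsProbabilityMeasure P]
    (H0 : Finset (Fin m)) (hexch : Exch P H0) {i : Fin m} (hi : i ∈ H0)
    (c : Option (Fin n)) :
    P.map (swapd n m i c) = P := by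
  cases c with
  | none => exact Measure.map_id
  | some j =>
    set σ : Equiv.Perm (Fin n ⊕ {i : Fin m // i ∈ H0}) :=
      Equiv.swap (Sum.inl j) (Sum.inr ⟨i, hi⟩) with hσ
    have hWs : ∀ z : Data n m,
        nullVec H0 (swapd n m i (some j) z) = nullVec H0 z ∘ σ := by
      intro z
      funext k
      rcases k with j' | l
      · by_cases h : j' = j
        · subst h
          simp [swapd, nullVec, hσ, Equiv.swap_apply_left]
        · have hne1 : (Sum.inl j' : Fin n ⊕ {i : Fin m // i ∈ H0}) ≠ Sum.inl j := by
            simpa using h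
          have hne2 : (Sum.inl j' : Fin n ⊕ {i : Fin m // i ∈ H0})
              ≠ Sum.inr ⟨i, hi⟩ := by simp
          simp [swapd, nullVec, hσ, Function.update_of_ne h,
            Equiv.swap_apply_of_ne_of_ne hne1 hne2]
      · by_cases h : l = (⟨i, hi⟩ : {i : Fin m // i ∈ H0})
        · subst h
          simp [swapd, nullVec, hσ, Equiv.swap_apply_right]
        · have h' : l.1 ≠ i := fun hh => h (Subtype.ext hh)
          have hne1 : (Sum.inr l : Fin n ⊕ {i : Fin m // i ∈ H0}) ≠ Sum.inl j := by
            simp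
          have hne2 : (Sum.inr l : Fin n ⊕ {i : Fin m // i ∈ H0})
              ≠ Sum.inr ⟨i, hi⟩ := by simpa using h
          simp [swapd, nullVec, hσ, Function.update_of_ne h',
            Equiv.swap_apply_of_ne_of_ne hne1 hne2]
    have hX1s : ∀ z : Data n m,
        (fun l : {i : Fin m // i ∉ H0} => (swapd n m i (some j) z).2 l.1)
          = fun l => z.2 l.1 := by
      intro z
      funext l
      have h' : l.1 ≠ i := fun hh => l.2 (hh ▸ hi)
      simp [swapd, Function.update_of_ne h']
    have hW := measurable_nullVec (n := n) H0
    have hX1 := measurable_X1 (n := n) H0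
    have hσm : Measurable fun w : (Fin n ⊕ {i : Fin m // i ∈ H0}) → ℝ => w ∘ σ :=
      measurable_pi_lambda _ fun _ => measurable_pi_apply _
    have hWσ : Measurable fun z : Data n m => nullVec H0 z ∘ σ := hσm.comp hW
    have hpair1 : P.map (fun z : Data n m =>
          (nullVec H0 z ∘ σ, fun l : {i : Fin m // i ∉ H0} => z.2 l.1))
        = (P.map (fun z => nullVec H0 z ∘ σ)).prod
            (P.map (fun z (l : {i : Fin m // i ∉ H0}) => z.2 l.1)) :=
      (indepFun_iff_map_prod_eq_prod_map_map hWσ.aemeasurable hX1.aemeasurable).mp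
        (hexch.2.comp hσm measurable_id)
    have hpair2 : P.map (fun z : Data n m =>
          (nullVec H0 z, fun l : {i : Fin m // i ∉ H0} => z.2 l.1))
        = (P.map (nullVec H0)).prod
            (P.map (fun z (l : {i : Fin m // i ∉ H0}) => z.2 l.1)) :=
      (indepFun_iff_map_prod_eq_prod_map_map hW.aemeasurable hX1.aemeasurable).mp
        hexch.2
    have hswapm : Measurable (swapd n m i (some j)) := measurable_swapd i _
    have key : (P.map (swapd n m i (some j))).map (eD n m H0) = P.map (eD n m H0) := by
      rw [Measure.map_map (eD n m H0).measurable hswapm]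
      have h1 : (eD n m H0) ∘ (swapd n m i (some j))
          = fun z : Data n m =>
              (nullVec H0 z ∘ σ, fun l : {i : Fin m // i ∉ H0} => z.2 l.1) := by
        funext z
        rw [Function.comp_apply, eD_apply]
        exact Prod.ext (hWs z) (hX1s z)
      have h2 : ⇑(eD n m H0) = fun z : Data n m =>
          (nullVec H0 z, fun l : {i : Fin m // i ∉ H0} => z.2 l.1) :=
        funext (eD_apply H0)
      rw [h1, h2, hpair1, hpair2, hexch.1 σ]
    calc P.map (swapd n m i (some j))
        = ((P.map (swapd n m i (some j))).map (eD n m H0)).map (eD n m H0).symm := by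
          rw [Measure.map_map (eD n m H0).symm.measurable (eD n m H0).measurable,
            MeasurableEquiv.symm_comp_self, Measure.map_id]
      _ = (P.map (eD n m H0)).map (eD n m H0).symm := by rw [key]
      _ = P := by
          rw [Measure.map_map (eD n m H0).symm.measurable (eD n m H0).measurable,
            MeasurableEquiv.symm_comp_self, Measure.map_id]

lemma integral_phi_swapd {n m : ℕ} {α : ℝ} (hm : 1 ≤ m) (hα : 0 ≤ α)
    (P : Measure (Data n m)) [IsProbabilityMeasure P]
    (H0 : Finset (Fin m)) (hexch : Exch P H0) {i : Fin m} (hi : i ∈ H0)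
    (c : Option (Fin n)) :
    ∫ z, phi n m α i (swapd n m i c z) ∂P = ∫ z, phi n m α i z ∂P := by
  have h := integral_map (μ := P) (φ := swapd n m i c)
    (measurable_swapd i c).aemeasurable
    (f := phi n m α i) ((measurable_phi hm hα i).aestronglyMeasurable)
  rw [map_swapd_eq P H0 hexch hi c] at h
  exact h.symm

lemma integrable_phi_comp {n m : ℕ} {α : ℝ} (hm : 1 ≤ m) (hα : 0 ≤ α)
    (P : Measure (Data n m)) [IsProbabilityMeasure P] (i : Fin m)
    {g : Data n m → Data n m} (hg : Measurable g) :
    Integrable (fun z => phi n m α i (g z)) P := by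
  refine (integrable_const (1:ℝ)).mono'
    (((measurable_phi hm hα i).comp hg).aestronglyMeasurable)
    (Filter.Eventually.of_forall fun z => ?_)
  rw [Real.norm_eq_abs, abs_of_nonneg (phi_nonneg _ _ _ _ _)]
  exact phi_le_one _ _ _ _ _

end FDRProof

/-- **Theorem 1 (upper bound).** Under Assumption (Exch), for all `n, m ≥ 1` and
`α ∈ (0,1)`, the semi-supervised BH procedure satisfies `FDR(P, BĤ_α) ≤ α·m₀/m`. -/
theorem fdr_upper_bound
    (n m : ℕ) (hn : 1 ≤ n) (hm : 1 ≤ m)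
    (α : ℝ) (hα : α ∈ Set.Ioo (0 : ℝ) 1)
    (P : Measure (Data n m)) [IsProbabilityMeasure P]
    (P0 : Measure ℝ) [IsProbabilityMeasure P0]
    (hcont : ∀ x : ℝ, P0 {x} = 0)
    (H0 : Finset (Fin m))
    (hY : ∀ j : Fin n, P.map (fun z => z.1 j) = P0)
    (hH0 : ∀ i : Fin m, i ∈ H0 ↔ P.map (fun z => z.2 i) = P0)
    (hexch : Exch P H0) :
    FDR P H0 (BHhat n m α) ≤ α * H0.card / m := by
  obtain ⟨hα0, hα1⟩ := hα
  have hmR : (0:ℝ) < m := by exact_mod_cast hm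
  have hnR : (0:ℝ) < (n:ℝ) + 1 := by positivity
  have hkey : ∀ i ∈ H0, ∫ z, phi n m α i z ∂P ≤ α / m := by
    intro i hi
    have hsum : ∑ c : Option (Fin n), ∫ z, phi n m α i (swapd n m i c z) ∂P
        = ((n:ℝ) + 1) * ∫ z, phi n m α i z ∂P := by
      rw [Finset.sum_congr rfl
        (fun c _ => integral_phi_swapd hm hα0.le P H0 hexch hi c),
        Finset.sum_const, Finset.card_univ, Fintype.card_option, Fintype.card_fin,
        nsmul_eq_mul]
      push_cast
      ring
    have hsum2 : ∑ c : Option (Fin n), ∫ z, phi n m α i (swapd n m i c z) ∂P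
        = ∫ z, ∑ c : Option (Fin n), phi n m α i (swapd n m i c z) ∂P :=
      (integral_finset_sum _ fun c _ =>
        integrable_phi_comp hm hα0.le P i (measurable_swapd i c)).symm
    have hle : ∫ z, ∑ c : Option (Fin n), phi n m α i (swapd n m i c z) ∂P
        ≤ ((n:ℝ) + 1) * α / m := by
      calc ∫ z, ∑ c : Option (Fin n), phi n m α i (swapd n m i c z) ∂P
          ≤ ∫ _z, ((n:ℝ) + 1) * α / m ∂P := by
            refine integral_mono ?_ (integrable_const _)
              (fun z => sum_phi_swapd_le hm hα0 i z)
            exact integrable_finset_sum _ fun c _ =>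
              integrable_phi_comp hm hα0.le P i (measurable_swapd i c)
        _ = ((n:ℝ) + 1) * α / m := by
            rw [integral_const]
            simp
    have hfinal : ((n:ℝ) + 1) * (∫ z, phi n m α i z ∂P) ≤ ((n:ℝ) + 1) * (α / m) := by
      rw [← hsum]
      rw [hsum2]
      calc ∫ z, ∑ c : Option (Fin n), phi n m α i (swapd n m i c z) ∂P
          ≤ ((n:ℝ) + 1) * α / m := hle
        _ = ((n:ℝ) + 1) * (α / m) := by ring
    exact le_of_mul_le_mul_left hfinal hnR
  have hFDR : FDR P H0 (BHhat n m α) = ∑ i ∈ H0, ∫ z, phi n m α i z ∂P := by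
    unfold FDR
    simp only [FDP_eq_sum α H0]
    exact integral_finset_sum _ fun i _ =>
      integrable_phi_comp hm hα0.le P i measurable_id
  rw [hFDR]
  calc ∑ i ∈ H0, ∫ z, phi n m α i z ∂P ≤ ∑ _i ∈ H0, α / m :=
        Finset.sum_le_sum hkey
    _ = H0.card * (α / m) := by rw [Finset.sum_const, nsmul_eq_mul]
    _ = α * H0.card / m := by ring


end SemiSup
end
end

section
/- Let α ∈ (0,1) and η ∈ (0,1). For all integers n, m ≥ 1 with n/m ≤ 1/(4α), the supremum over P ∈ A_{n,m} of P_{Z~P}( TDP(P, BH*_{α(1−η)}) > TDP(P, BĤ_α) ) is at least 1 − 2α. -/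
open MeasureTheory ProbabilityTheory Finset

noncomputable section

namespace SemiSup

/-! ### Auxiliary lemmas for the proof of Proposition 4 -/

lemma aux_filter_subset_zero {m : ℕ} [NeZero m] (β : ℝ) (hβ1 : β < 1) (hβ0 : 0 ≤ β)
    (p : Fin m → ℝ) (h1 : ∀ i : Fin m, i ≠ 0 → p i = 1) (k : ℕ) (hk : k ≤ m) :
    (Finset.univ.filter (fun i => p i ≤ β * k / m)) ⊆ {0} := by
  intro i hi
  simp only [Finset.mem_filter, Finset.mem_univ, true_and] at hi
  simp only [Finset.mem_singleton]
  by_contra hne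
  rw [h1 i hne] at hi
  have hmpos : (0:ℝ) < m := by
    have := Nat.pos_of_ne_zero (NeZero.ne m); exact_mod_cast this
  have : β * k / m ≤ β := by
    rw [div_le_iff₀ hmpos]
    have : (k:ℝ) ≤ m := by exact_mod_cast hk
    nlinarith
  linarith

lemma aux_bh_oracle {m : ℕ} [NeZero m] (β : ℝ) (hβ0 : 0 < β) (hβ1 : β < 1)
    (p : Fin m → ℝ) (h0 : p 0 = 0) (h1 : ∀ i : Fin m, i ≠ 0 → p i = 1) :
    BHset m β p = {0} := by
  have hmpos : 0 < m := Nat.pos_of_ne_zero (NeZero.ne m)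
  have hmr : (0:ℝ) < m := by exact_mod_cast hmpos
  have hk : BHk m β p = 1 := by
    have hset : {k : ℕ | k ≤ m ∧
        k ≤ (((Finset.univ : Finset (Fin m)).filter (fun i => p i ≤ β * k / m)).card)}
        = Set.Iic 1 := by
      ext k
      simp only [Set.mem_setOf_eq, Set.mem_Iic]
      constructor
      · rintro ⟨hkm, hkc⟩
        have := Finset.card_le_card (aux_filter_subset_zero β hβ1 hβ0.le p h1 k hkm)
        simpa using hkc.trans (by simpa using this)
      · intro hk1
        interval_cases k
        · simp
        · refine ⟨hmpos, ?_⟩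
          have : (0 : Fin m) ∈ Finset.univ.filter (fun i => p i ≤ β * (1:ℕ) / m) := by
            simp only [Finset.mem_filter, Finset.mem_univ, true_and, h0]
            positivity
          exact Finset.card_pos.mpr ⟨0, this⟩
    rw [BHk, hset, csSup_Iic]
  rw [BHset, hk]
  apply Finset.Subset.antisymm
  · exact aux_filter_subset_zero β hβ1 hβ0.le p h1 1 hmpos
  · intro i hi
    simp only [Finset.mem_singleton] at hi
    subst hi
    simp only [Finset.mem_filter, Finset.mem_univ, true_and, h0, Nat.cast_one]
    positivity

lemma aux_bh_hat {m : ℕ} [NeZero m] (α c : ℝ) (hα0 : 0 < α) (hα1 : α < 1)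
    (hc : 0 < c) (hkey : α * 1 / m < c)
    (p : Fin m → ℝ) (h0 : p 0 = c) (h1 : ∀ i : Fin m, i ≠ 0 → p i = 1) :
    BHset m α p = ∅ := by
  have hmpos : 0 < m := Nat.pos_of_ne_zero (NeZero.ne m)
  have hmr : (0:ℝ) < m := by exact_mod_cast hmpos
  have hk : BHk m α p = 0 := by
    have hset : {k : ℕ | k ≤ m ∧
        k ≤ (((Finset.univ : Finset (Fin m)).filter (fun i => p i ≤ α * k / m)).card)}
        = Set.Iic 0 := by
      ext k
      simp only [Set.mem_setOf_eq, Set.mem_Iic, Nat.le_zero]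
      constructor
      · rintro ⟨hkm, hkc⟩
        by_contra hk0
        have hsub := Finset.card_le_card (aux_filter_subset_zero α hα1 hα0.le p h1 k hkm)
        simp only [Finset.card_singleton] at hsub
        have hk1 : k = 1 := by omega
        subst hk1
        have hempty : (Finset.univ.filter (fun i => p i ≤ α * (1:ℕ) / m)) = ∅ := by
          ext i
          simp only [Finset.mem_filter, Finset.mem_univ, true_and, Finset.notMem_empty,
            iff_false, not_le]
          by_cases hi : i = 0
          · subst hi; rw [h0]; exact_mod_cast hkey
          · rw [h1 i hi]
            have hm1 : (1:ℝ) ≤ m := by exact_mod_cast hmpos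
            calc α * ((1:ℕ):ℝ) / m ≤ α := by
                  rw [div_le_iff₀ hmr]; push_cast; nlinarith
              _ < 1 := hα1
        rw [hempty] at hkc
        simp at hkc
      · rintro rfl
        simp
    rw [BHk, hset, csSup_Iic]
  rw [BHset, hk]
  ext i
  simp only [Finset.mem_filter, Finset.mem_univ, true_and, Finset.notMem_empty,
    iff_false, Nat.cast_zero, mul_zero, zero_div, not_le]
  by_cases hi : i = 0
  · subst hi; rw [h0]; exact hc
  · rw [h1 i hi]; norm_num

lemma aux_unif_prob (a b : ℝ) (h : b = a + 1) :
    IsProbabilityMeasure (volume.restrict (Set.Ioo a b)) := by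
  constructor
  rw [Measure.restrict_apply_univ, Real.volume_Ioo, h]
  norm_num

lemma aux_unif_atom (a b x : ℝ) : (volume.restrict (Set.Ioo a b)) {x} = 0 := by
  rw [Measure.restrict_apply (measurableSet_singleton x)]
  exact measure_mono_null Set.inter_subset_left Real.volume_singleton

/-- **Proposition 4 (power lower bound).** Let `α ∈ (0,1)` and `η ∈ (0,1)`. For all
`n, m ≥ 1` with `n/m ≤ 1/(4α)`, the supremum over `P ∈ A_{n,m}` of
`P(TDP(P, BH*_{α(1−η)}) > TDP(P, BĤ_α))` is at least `1 − 2α`. -/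
theorem power_lower_bound
    (α η : ℝ) (hα : α ∈ Set.Ioo (0 : ℝ) 1) (hη : η ∈ Set.Ioo (0 : ℝ) 1)
    (n m : ℕ) (hn : 1 ≤ n) (hm : 1 ≤ m) (hnm : (n : ℝ) / m ≤ 1 / (4 * α)) :
    sSup {x : ℝ | ∃ (P0 : Measure ℝ) (Q : Fin m → Measure ℝ), memA n m P0 Q ∧
        x = ((prodP n m P0 Q)
            {z | TDP (H1set P0 Q) (BHstar n m P0 (α * (1 - η)) z)
                  > TDP (H1set P0 Q) (BHhat n m α z)}).toReal}
      ≥ 1 - 2 * α := by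
  obtain ⟨hα0, hα1⟩ := hα
  obtain ⟨hη0, hη1⟩ := hη
  haveI : NeZero m := ⟨by omega⟩
  -- the witness distribution
  set P0 : Measure ℝ := volume.restrict (Set.Ioo 0 1) with hP0
  set S : Fin m → Set ℝ := fun i => if i = 0 then Set.Ioo 2 3 else Set.Ioo (-2) (-1)
    with hS
  set Q : Fin m → Measure ℝ := fun i => volume.restrict (S i) with hQ
  have hQ0 : Q 0 = volume.restrict (Set.Ioo 2 3) := by simp [hQ, hS]
  have hQi : ∀ i : Fin m, i ≠ 0 → Q i = volume.restrict (Set.Ioo (-2) (-1)) := by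
    intro i hi; simp [hQ, hS, hi]
  haveI hP0prob : IsProbabilityMeasure P0 := aux_unif_prob 0 1 (by norm_num)
  have hQprob : ∀ i, IsProbabilityMeasure (Q i) := by
    intro i
    by_cases hi : i = 0
    · rw [hi, hQ0]; exact aux_unif_prob 2 3 (by norm_num)
    · rw [hQi i hi]; exact aux_unif_prob (-2) (-1) (by norm_num)
  -- Q 0 ≠ P0 and hence 0 is a false null
  have hQ0ne : Q 0 ≠ P0 := by
    intro h
    have h1 : Q 0 (Set.Ioo 2 3) = 1 := by
      rw [hQ0, Measure.restrict_apply measurableSet_Ioo, Set.inter_self, Real.volume_Ioo]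
      norm_num
    have h2 : P0 (Set.Ioo 2 3) = 0 := by
      rw [hP0, Measure.restrict_apply measurableSet_Ioo]
      have : Set.Ioo (2:ℝ) 3 ∩ Set.Ioo 0 1 = ∅ := by
        ext x
        simp only [Set.mem_inter_iff, Set.mem_Ioo, Set.mem_empty_iff_false, iff_false,
          not_and, and_imp]
        intros
        linarith
      rw [this]
      simp
    rw [h] at h1
    rw [h1] at h2
    exact one_ne_zero h2
  have h0mem : (0 : Fin m) ∈ H1set P0 Q := by
    classical
    simp only [H1set, Finset.mem_filter, Finset.mem_univ, true_and]
    convert hQ0ne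
  have hmemA : memA n m P0 Q := by
    refine ⟨⟨hP0prob, hQprob, fun x => aux_unif_atom 0 1 x, fun i x => ?_⟩, ?_⟩
    · by_cases hi : i = 0
      · rw [hi, hQ0]; exact aux_unif_atom 2 3 x
      · rw [hQi i hi]; exact aux_unif_atom (-2) (-1) x
    · exact Finset.card_pos.mpr ⟨0, h0mem⟩
  -- key arithmetic: α (n+1) < m
  have hmr : (0:ℝ) < m := by exact_mod_cast (by omega : 0 < m)
  have hnr : (1:ℝ) ≤ n := by exact_mod_cast hn
  have h4a : 4 * α * n ≤ m := by
    rw [div_le_div_iff₀ hmr (by positivity)] at hnm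
    nlinarith
  have hkey : α * 1 / m < 1 / ((n:ℝ) + 1) := by
    rw [div_lt_div_iff₀ hmr (by positivity)]
    nlinarith
  -- the good event
  set G : Set (Data n m) :=
    (Set.univ.pi fun _ : Fin n => Set.Ioo (0:ℝ) 1) ×ˢ (Set.univ.pi S) with hG
  -- on the good event, BH* rejects exactly {0} while BĤ rejects nothing
  have hcore : ∀ z ∈ G,
      TDP (H1set P0 Q) (BHstar n m P0 (α * (1 - η)) z)
        > TDP (H1set P0 Q) (BHhat n m α z) := by
    intro z hz
    rw [hG, Set.mem_prod, Set.mem_univ_pi, Set.mem_univ_pi] at hz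
    obtain ⟨hY, hX⟩ := hz
    have hX0 : z.2 0 ∈ Set.Ioo (2:ℝ) 3 := by have := hX 0; simpa [hS] using this
    have hXi : ∀ i : Fin m, i ≠ 0 → z.2 i ∈ Set.Ioo (-2:ℝ) (-1) := by
      intro i hi; have := hX i; simpa [hS, hi] using this
    -- oracle p-values
    have hstar : BHstar n m P0 (α * (1 - η)) z = {0} := by
      rw [BHstar]
      apply aux_bh_oracle
      · exact mul_pos hα0 (by linarith)
      · nlinarith
      · rw [F0, hP0, Measure.restrict_apply measurableSet_Ici]
        have : Set.Ici (z.2 0) ∩ Set.Ioo 0 1 = ∅ := by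
          ext x
          simp only [Set.mem_inter_iff, Set.mem_Ici, Set.mem_Ioo, Set.mem_empty_iff_false,
            iff_false, not_and, and_imp]
          intros
          have := hX0.1
          linarith
        rw [this]
        simp
      · intro i hi
        rw [F0, hP0, Measure.restrict_apply measurableSet_Ici]
        have : Set.Ici (z.2 i) ∩ Set.Ioo 0 1 = Set.Ioo 0 1 := by
          apply Set.inter_eq_self_of_subset_right
          intro x hx
          simp only [Set.mem_Ioo] at hx
          have h2 := (hXi i hi).2
          simp only [Set.mem_Ici]
          linarith [hx.1]
        rw [this, Real.volume_Ioo]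
        norm_num
    -- empirical p-values
    have hhat : BHhat n m α z = ∅ := by
      rw [BHhat]
      apply aux_bh_hat α (1 / ((n:ℝ) + 1)) hα0 hα1 (by positivity) hkey
      · rw [phat]
        have : (Finset.univ.filter (fun j => z.1 j ≥ z.2 0)) = ∅ := by
          apply Finset.filter_eq_empty_iff.mpr
          intro j _
          have h1 := (hY j).2
          have h2 := hX0.1
          simp only [ge_iff_le, not_le]
          linarith
        rw [this]
        simp
      · intro i hi
        rw [phat]
        have : (Finset.univ.filter (fun j => z.1 j ≥ z.2 i)) = Finset.univ := by
          apply Finset.filter_eq_self.mpr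
          intro j _
          have h1 := (hY j).1
          have h2 := (hXi i hi).2
          simp only [ge_iff_le]
          linarith
        rw [this, Finset.card_univ, Fintype.card_fin]
        have hne : ((n:ℝ) + 1) ≠ 0 := by positivity
        field_simp
        ring
    rw [hstar, hhat, TDP, TDP]
    rw [Finset.empty_inter, Finset.singleton_inter_of_mem h0mem]
    simp only [Finset.card_empty, Finset.card_singleton, Nat.cast_zero, Nat.cast_one,
      zero_div]
    apply div_pos one_pos
    exact lt_max_of_lt_left one_pos
  -- the good event has probability one
  haveI : IsProbabilityMeasure (prodP n m P0 Q) := by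
    haveI := fun i => hQprob i
    rw [prodP]
    infer_instance
  have hG1 : prodP n m P0 Q G = 1 := by
    rw [prodP, hG, Measure.prod_prod, Measure.pi_pi, Measure.pi_pi]
    have hP : P0 (Set.Ioo 0 1) = 1 := by
      rw [hP0, Measure.restrict_apply measurableSet_Ioo, Set.inter_self, Real.volume_Ioo]
      norm_num
    have hQS : ∀ i, Q i (S i) = 1 := by
      intro i
      have hSm : MeasurableSet (S i) := by
        rw [hS]; dsimp only; split <;> exact measurableSet_Ioo
      rw [hQ, Measure.restrict_apply hSm, Set.inter_self]
      by_cases hi : i = 0 <;> simp [hS, hi, Real.volume_Ioo] <;> norm_num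
    simp [hP, hQS]
  have hE1 : ((prodP n m P0 Q)
      {z | TDP (H1set P0 Q) (BHstar n m P0 (α * (1 - η)) z)
            > TDP (H1set P0 Q) (BHhat n m α z)}).toReal = 1 := by
    have hle : prodP n m P0 Q G ≤ prodP n m P0 Q
        {z | TDP (H1set P0 Q) (BHstar n m P0 (α * (1 - η)) z)
              > TDP (H1set P0 Q) (BHhat n m α z)} :=
      measure_mono (fun z hz => hcore z hz)
    have : prodP n m P0 Q
        {z | TDP (H1set P0 Q) (BHstar n m P0 (α * (1 - η)) z)
              > TDP (H1set P0 Q) (BHhat n m α z)} = 1 :=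
      le_antisymm prob_le_one (hG1 ▸ hle)
    rw [this]
    simp
  -- conclude via the supremum
  have hmem : (1:ℝ) ∈ {x : ℝ | ∃ (P0 : Measure ℝ) (Q : Fin m → Measure ℝ),
      memA n m P0 Q ∧ x = ((prodP n m P0 Q)
          {z | TDP (H1set P0 Q) (BHstar n m P0 (α * (1 - η)) z)
                > TDP (H1set P0 Q) (BHhat n m α z)}).toReal} :=
    ⟨P0, Q, hmemA, hE1.symm⟩
  have hbdd : BddAbove {x : ℝ | ∃ (P0 : Measure ℝ) (Q : Fin m → Measure ℝ),
      memA n m P0 Q ∧ x = ((prodP n m P0 Q)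
          {z | TDP (H1set P0 Q) (BHstar n m P0 (α * (1 - η)) z)
                > TDP (H1set P0 Q) (BHhat n m α z)}).toReal} := by
    refine ⟨1, ?_⟩
    rintro x ⟨P0', Q', hA, rfl⟩
    haveI := hA.1.1
    haveI := fun i => hA.1.2.1 i
    haveI : IsProbabilityMeasure (prodP n m P0' Q') := by
      rw [prodP]; infer_instance
    refine le_trans (ENNReal.toReal_mono ENNReal.one_ne_top prob_le_one) ?_
    simp
  have := le_csSup hbdd hmem
  linarith


end SemiSup
end
end

section
/- Correctness of Algorithm 1: let n, m ≥ 1, α ∈ (0,1), and let z = (y_1,…,y_n, x_1,…,x_m) ∈ ℝ^{n+m} have pairwise distinct coordinates. Let p̂_i = (n+1)^{-1}(1 + Σ_{j=1}^n 1{y_j ≥ x_i}) and let k̂ = max{k ∈ {0,…,m} : p̂_(k) ≤ α·k/m} be the BH rejection number for these empirical p-values (p̂_(1) ≤ … ≤ p̂_(m) ordered, p̂_(0)=0). Let x_(1) > x_(2) > … > x_(m) be the decreasingly ordered test values, for 1 ≤ k ≤ m let V_k = #{j ∈ {1,…,n} : y_j > x_(k)}, and let K = max{k ∈ {1,…,m}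 : ((V_k + 1)/(n+1))·(m/k) ≤ α} (K = 0 if the set is empty). Then K = k̂ and the BH rejection set {i : p̂_i ≤ α·k̂/m} equals {i : x_i ≥ x_(K)} (the empty set if K = 0). -/
open MeasureTheory ProbabilityTheory Finset

noncomputable section

namespace SemiSup

/-- The decreasingly ordered test values: `xdec m x (k-1)` is the `k`-th largest of
`x_1, …, x_m` (indices starting at `0`). -/
def xdec (m : ℕ) (x : Fin m → ℝ) (k : ℕ) : ℝ :=
  (List.insertionSort (· ≥ ·) (List.ofFn x)).getD k 0

/-- `Valg m x y k` is `V_k`, the number of training values strictly above the `k`-th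
largest test value. -/
def Valg (n m : ℕ) (x : Fin m → ℝ) (y : Fin n → ℝ) (k : ℕ) : ℕ :=
  ((Finset.univ : Finset (Fin n)).filter (fun j => y j > xdec m x (k - 1))).card

/-- The output `K` of Algorithm 1: the largest `k ∈ {1,…,m}` such that the estimated
FDP `((V_k+1)/(n+1))·(m/k)` is at most `α` (`K = 0` if there is none). -/
def Kalg (n m : ℕ) (α : ℝ) (x : Fin m → ℝ) (y : Fin n → ℝ) : ℕ :=
  sSup {k : ℕ | 1 ≤ k ∧ k ≤ m ∧
    ((Valg n m x y k + 1 : ℝ) / (n + 1)) * ((m : ℝ) / k) ≤ α}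


lemma count_eq_of_image_eq {m : ℕ} (x g : Fin m → ℝ) (hx : Function.Injective x)
    (hg : Function.Injective g) (him : Finset.image x Finset.univ = Finset.image g Finset.univ)
    (P : ℝ → Prop) [DecidablePred P] :
    (Finset.univ.filter fun i => P (x i)).card = (Finset.univ.filter fun j => P (g j)).card := by
  have h1 : (Finset.univ.filter fun i => P (x i)).card
      = ((Finset.univ.image x).filter P).card := by
    rw [Finset.filter_image, Finset.card_image_of_injective _ hx]
  have h2 : (Finset.univ.filter fun j => P (g j)).card
      = ((Finset.univ.image g).filter P).card := by
    rw [Finset.filter_image, Finset.card_image_of_injective _ hg]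
  rw [h1, h2, him]

/-- **Correctness of Algorithm 1.** For data with pairwise distinct coordinates,
the output `K` of Algorithm 1 equals the BH rejection number `k̂` for the empirical
p-values, and the BH rejection set equals `{i : x_i ≥ x_(K)}` (empty if `K = 0`). -/
theorem algorithm1_correct
    (n m : ℕ) (hn : 1 ≤ n) (hm : 1 ≤ m)
    (α : ℝ) (hα : α ∈ Set.Ioo (0 : ℝ) 1)
    (y : Fin n → ℝ) (x : Fin m → ℝ)
    (hdist : Function.Injective (Sum.elim y x)) :
    Kalg n m α x y = BHk m α (fun i => phat n y (x i)) ∧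
    BHset m α (fun i => phat n y (x i)) =
      Finset.univ.filter
        (fun i => Kalg n m α x y ≠ 0 ∧ xdec m x (Kalg n m α x y - 1) ≤ x i) := by
  classical
  obtain ⟨hα0, hα1⟩ := hα
  have hxinj : Function.Injective x := fun a b h => by
    have := hdist (show Sum.elim y x (.inr a) = Sum.elim y x (.inr b) from h)
    simpa using this
  have hyx : ∀ j i, y j ≠ x i := by
    intro j i h
    have := hdist (show Sum.elim y x (.inl j) = Sum.elim y x (.inr i) from h)
    simp at this
  set L := List.insertionSort (· ≥ ·) (List.ofFn x) with hLdef
  have hperm : L.Perm (List.ofFn x) := List.perm_insertionSort _ _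
  have hlen : L.length = m := by rw [hperm.length_eq, List.length_ofFn]
  have hsort : L.Pairwise (· ≥ ·) := List.pairwise_insertionSort _ _
  have hnodup : L.Nodup := hperm.nodup_iff.mpr (List.nodup_ofFn.mpr hxinj)
  set g : Fin m → ℝ := fun k => L.get (Fin.cast hlen.symm k) with hgdef
  have hxdec : ∀ (k : ℕ) (hk : k < m), xdec m x k = g ⟨k, hk⟩ := by
    intro k hk
    simp only [xdec, hgdef, ← hLdef]
    rw [List.getD_eq_getElem L 0 (by omega)]
    rfl
  have hganti : ∀ a b : Fin m, a ≤ b → g b ≤ g a := by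
    intro a b hab
    exact hsort.rel_get_of_le (by simpa using hab)
  have hginj : Function.Injective g := by
    intro a b h
    have h2 := List.nodup_iff_injective_get.mp hnodup h
    simpa [Fin.ext_iff] using h2
  have hgle : ∀ a b : Fin m, g b ≤ g a ↔ a ≤ b := by
    intro a b
    constructor
    · intro h
      by_contra hc
      push_neg at hc
      have h1 := hganti b a hc.le
      have := hginj (le_antisymm h h1)
      omega
    · exact hganti a b
  have him : Finset.image x Finset.univ = Finset.image g Finset.univ := by
    have h1 : Finset.image x Finset.univ = (List.ofFn x).toFinset := by
      ext a; simp [List.mem_ofFn, eq_comm]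
    have h2 : Finset.image g Finset.univ = L.toFinset := by
      ext a
      simp only [Finset.mem_image, Finset.mem_univ, true_and, List.mem_toFinset]
      constructor
      · rintro ⟨j, rfl⟩; exact List.get_mem _ _
      · intro ha
        obtain ⟨j, hj⟩ := List.mem_iff_get.mp ha
        exact ⟨Fin.cast hlen j, by simpa [hgdef] using hj⟩
    rw [h1, h2]
    ext a; simp [List.Perm.mem_iff hperm]
  -- counting lemma
  have ccount : ∀ k : Fin m, (Finset.univ.filter fun i => g k ≤ x i).card = (k : ℕ) + 1 := by
    intro k
    rw [count_eq_of_image_eq x g hxinj hginj him (fun t => g k ≤ t)]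
    have : (Finset.univ.filter fun j => g k ≤ g j) = Finset.Iic k := by
      ext j; simp [Finset.mem_Iic, hgle]
    rw [this, Fin.card_Iic]
  -- p-values
  set p : Fin m → ℝ := fun i => phat n y (x i) with hpdef
  set q : Fin m → ℝ := fun j => phat n y (g j) with hqdef
  have hphat_anti : ∀ s t : ℝ, s ≤ t → phat n y t ≤ phat n y s := by
    intro s t hst
    unfold phat
    gcongr
  have hppos : ∀ t : ℝ, 0 < phat n y t := by
    intro t
    unfold phat
    positivity
  have hqmono : ∀ a b : Fin m, a ≤ b → q a ≤ q b := by
    intro a b hab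
    exact hphat_anti _ _ (hganti a b hab)
  -- count function
  set c : ℝ → ℕ := fun t => (Finset.univ.filter fun i => p i ≤ t).card with hcdef
  have hcg : ∀ t, c t = (Finset.univ.filter fun j => q j ≤ t).card := by
    intro t
    exact count_eq_of_image_eq x g hxinj hginj him (fun s => phat n y s ≤ t)
  have hcmono : ∀ s t : ℝ, s ≤ t → c s ≤ c t := by
    intro s t hst
    exact Finset.card_le_card (Finset.monotone_filter_right _
      (fun i _ hi => le_trans hi hst))
  -- order statistic lemma
  have horder : ∀ k : ℕ, 1 ≤ k → (hkm : k ≤ m) → ∀ t : ℝ,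
      (q ⟨k - 1, by omega⟩ ≤ t ↔ k ≤ c t) := by
    intro k hk1 hkm t
    constructor
    · intro hq
      rw [hcg]
      have hsub : Finset.Iic (⟨k - 1, by omega⟩ : Fin m)
          ⊆ Finset.univ.filter fun j => q j ≤ t := by
        intro j hj
        simp only [Finset.mem_Iic] at hj
        simp only [Finset.mem_filter, Finset.mem_univ, true_and]
        exact le_trans (hqmono j _ hj) hq
      have := Finset.card_le_card hsub
      rw [Fin.card_Iic] at this
      simpa [Nat.sub_add_cancel hk1] using this
    · intro hc
      rw [hcg] at hc
      by_contra hq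
      push_neg at hq
      have hsub : (Finset.univ.filter fun j => q j ≤ t)
          ⊆ Finset.Iio (⟨k - 1, by omega⟩ : Fin m) := by
        intro j hj
        simp only [Finset.mem_filter, Finset.mem_univ, true_and] at hj
        simp only [Finset.mem_Iio]
        by_contra hjk
        push_neg at hjk
        exact absurd (le_trans (hqmono _ j hjk) hj) (not_le.mpr hq)
      have := Finset.card_le_card hsub
      rw [Fin.card_Iio] at this
      simp only [Fin.val_mk] at this
      omega
  -- V relation
  have hV : ∀ k : ℕ, 1 ≤ k → (hkm : k ≤ m) →
      ((Valg n m x y k : ℝ) + 1) / (n + 1) = q ⟨k - 1, by omega⟩ := by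
    intro k hk1 hkm
    have hgx : ∃ i, x i = g ⟨k - 1, by omega⟩ := by
      have : g ⟨k - 1, by omega⟩ ∈ Finset.image x Finset.univ := by
        rw [him]; exact Finset.mem_image_of_mem g (Finset.mem_univ _)
      simpa using this
    obtain ⟨i0, hi0⟩ := hgx
    have hValg : Valg n m x y k = (Finset.univ.filter fun j => y j ≥ g ⟨k - 1, by omega⟩).card := by
      unfold Valg
      congr 1
      ext j
      rw [hxdec (k - 1) (by omega)]
      simp only [Finset.mem_filter, Finset.mem_univ, true_and]
      constructor
      · exact le_of_lt
      · intro h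
        rcases lt_or_eq_of_le h with h' | h'
        · exact h'
        · exact absurd (h'.symm.trans hi0.symm) (hyx j i0)
    rw [hValg]
    simp only [hqdef, phat]
    ring_nf
  -- equivalence of membership conditions for k ≥ 1
  have hmR : (0 : ℝ) < m := by exact_mod_cast hm
  have halgiff : ∀ k : ℕ, 1 ≤ k → (hkm : k ≤ m) →
      ((((Valg n m x y k : ℝ) + 1) / (n + 1)) * ((m : ℝ) / k) ≤ α
        ↔ q ⟨k - 1, by omega⟩ ≤ α * k / m) := by
    intro k hk1 hkm
    have hkR : (0 : ℝ) < k := by exact_mod_cast hk1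
    rw [hV k hk1 hkm]
    rw [← mul_div_assoc, div_le_iff₀ hkR, ← le_div_iff₀ hmR]
  -- the two index sets
  set A : Set ℕ := {k : ℕ | 1 ≤ k ∧ k ≤ m ∧
      ((Valg n m x y k + 1 : ℝ) / (n + 1)) * ((m : ℝ) / k) ≤ α} with hAdef
  set B : Set ℕ := {k : ℕ | k ≤ m ∧
      k ≤ (((Finset.univ : Finset (Fin m)).filter
        (fun i => phat n y (x i) ≤ α * k / m)).card)} with hBdef
  have hBc : ∀ k : ℕ, k ∈ B ↔ k ≤ m ∧ k ≤ c (α * k / m) := by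
    intro k; rfl
  have hBA : B = A ∪ {0} := by
    ext k
    rcases Nat.eq_zero_or_pos k with rfl | hk1
    · simp only [Set.mem_union, Set.mem_singleton_iff, or_true, iff_true]
      exact ⟨Nat.zero_le m, Nat.zero_le _⟩
    · simp only [Set.mem_union, Set.mem_singleton_iff, hAdef, Set.mem_setOf_eq,
        hBc, or_iff_left (by omega : ¬ k = 0)]
      constructor
      · rintro ⟨hkm, hkc⟩
        exact ⟨hk1, hkm, (halgiff k hk1 hkm).mpr ((horder k hk1 hkm _).mpr hkc)⟩
      · rintro ⟨_, hkm, halg⟩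
        exact ⟨hkm, (horder k hk1 hkm _).mp ((halgiff k hk1 hkm).mp halg)⟩
  have hKalgA : Kalg n m α x y = sSup A := rfl
  have hBHkB : BHk m α p = sSup B := rfl
  have hbddA : BddAbove A := ⟨m, fun k hk => hk.2.1⟩
  have hbddB : BddAbove B := ⟨m, fun k hk => hk.1⟩
  have hmain : sSup A = sSup B := by
    rcases Set.eq_empty_or_nonempty A with hA | hA
    · rw [hA, hBA, hA]
      simp
    · rw [hBA, csSup_union hbddA hA bddAbove_singleton (Set.singleton_nonempty 0),
        csSup_singleton]
      simp
  have hpart1 : Kalg n m α x y = BHk m α (fun i => phat n y (x i)) := by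
    rw [hKalgA, hBHkB] at *
    exact hmain
  refine ⟨hpart1, ?_⟩
  -- Part 2
  set K := Kalg n m α x y with hKdef
  have hKB : BHk m α p = K := hpart1.symm
  rcases Nat.eq_zero_or_pos K with hK0 | hK1
  · -- K = 0 : both sides empty
    rw [BHset]
    have h1 : (Finset.univ.filter fun i => p i ≤ α * (BHk m α p) / m) = ∅ := by
      apply Finset.filter_false_of_mem
      intro i _
      rw [hKB, hK0]
      push_neg
      simpa using hppos (x i)
    have h2 : (Finset.univ.filter
        (fun i => K ≠ 0 ∧ xdec m x (K - 1) ≤ x i)) = ∅ := by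
      apply Finset.filter_false_of_mem
      intro i _
      simp [hK0]
    rw [h1, h2]
  · -- K ≥ 1
    have hKmem : K ∈ B := by
      have hBne : B.Nonempty := ⟨0, ⟨Nat.zero_le m, Nat.zero_le _⟩⟩
      have := Nat.sSup_mem hBne hbddB
      rwa [← hBHkB, hKB] at this
    obtain ⟨hKm, hKc⟩ := (hBc K).mp hKmem
    have hqK : q ⟨K - 1, by omega⟩ ≤ α * K / m := (horder K hK1 hKm _).mpr hKc
    rw [BHset, hKB]
    ext i
    simp only [Finset.mem_filter, Finset.mem_univ, true_and]
    rw [hxdec (K - 1) (by omega)]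
    constructor
    · intro hpi
      refine ⟨by omega, ?_⟩
      by_contra hlt
      push_neg at hlt
      -- x i < g ⟨K-1⟩
      have hKm' : K < m := by
        rcases lt_or_eq_of_le hKm with h | h
        · exact h
        · exfalso
          have : x i ∈ Finset.image g Finset.univ := by
            rw [← him]; exact Finset.mem_image_of_mem x (Finset.mem_univ _)
          obtain ⟨j, _, hj⟩ := Finset.mem_image.mp this
          have hjle : j ≤ (⟨K - 1, by omega⟩ : Fin m) := by
            have := j.isLt
            simp only [Fin.le_def, Fin.val_mk]
            omega
          have := hganti j _ hjle
          rw [hj] at this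
          exact absurd this (not_le.mpr hlt)
      -- K+1 ∈ B, contradiction with maximality
      have hsub : insert i (Finset.univ.filter fun i' => g ⟨K - 1, by omega⟩ ≤ x i')
          ⊆ Finset.univ.filter fun i' => p i' ≤ α * (K + 1) / m := by
        intro i' hi'
        simp only [Finset.mem_insert, Finset.mem_filter, Finset.mem_univ, true_and] at hi' ⊢
        have hstep : α * K / m ≤ α * ((K : ℝ) + 1) / m := by
          gcongr
          linarith
        rcases hi' with rfl | hgi'
        · exact le_trans hpi hstep
        · exact le_trans (le_trans (hphat_anti _ _ hgi') hqK) hstep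
      have hnotmem : i ∉ (Finset.univ.filter fun i' => g ⟨K - 1, by omega⟩ ≤ x i') := by
        simp only [Finset.mem_filter, Finset.mem_univ, true_and]
        exact not_le.mpr hlt
      have hcard : K + 1 ≤ (Finset.univ.filter fun i' => p i' ≤ α * (K + 1) / m).card := by
        calc K + 1 = (insert i (Finset.univ.filter
            fun i' => g ⟨K - 1, by omega⟩ ≤ x i')).card := by
              rw [Finset.card_insert_of_notMem hnotmem, ccount]
              simp only [Fin.val_mk]
              omega
          _ ≤ _ := Finset.card_le_card hsub
      have hK1B : K + 1 ∈ B := by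
        refine ⟨by omega, ?_⟩
        simp only [Nat.cast_add, Nat.cast_one]
        exact hcard
      have : K + 1 ≤ sSup B := le_csSup hbddB hK1B
      rw [← hBHkB, hKB] at this
      omega
    · rintro ⟨-, hge⟩
      exact le_trans (hphat_anti _ _ hge) hqK



end SemiSup
end
end
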